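/- arXiv:1804.10894 — 2 statements merged into one kernel-verified Lean document; each statement's English description precedes it below -/
import Mathlib

section
/- The merge operation ⋆ on sorted lists of (index, direction) pairs is associative: for all sequences s, t, u, (s ⋆ t) ⋆ u = s ⋆ (t ⋆ u). -/
/-- Shift all indices of an (index, direction) word by one. -/
def shiftW (t : List (ℕ × Bool)) : List (ℕ × Bool) := t.map (fun p => (p.1 + 1, p.2))

/-- The merge operation `⋆` on (index, direction) words. -/
def starW : List (ℕ × Bool) → List (ℕ × Bool) → List (ℕ × Bool)
  | [], t => t
  | s, [] => s
  | (i, a) :: s, (j, b) :: t =>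
      if i ≤ j then (i, a) :: starW s (shiftW ((j, b) :: t))
      else (j, b) :: starW ((i, a) :: s) t
  termination_by s t => s.length + t.length
  decreasing_by all_goals (simp [shiftW]; try omega)

@[simp] lemma starW_nil_left (t : List (ℕ × Bool)) : starW [] t = t := by
  cases t <;> simp [starW]

@[simp] lemma starW_nil_right (s : List (ℕ × Bool)) : starW s [] = s := by
  cases s <;> simp [starW]

@[simp] lemma shiftW_nil : shiftW [] = [] := rfl
@[simp] lemma shiftW_cons (i : ℕ) (a : Bool) (t : List (ℕ × Bool)) :
    shiftW ((i,a) :: t) = (i+1, a) :: shiftW t := rfl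
@[simp] lemma shiftW_length (t : List (ℕ × Bool)) : (shiftW t).length = t.length := by
  simp [shiftW]

lemma starW_shift (s t : List (ℕ × Bool)) :
    starW (shiftW s) (shiftW t) = shiftW (starW s t) := by
  induction s, t using starW.induct with
  | case1 t => simp
  | case2 s => simp
  | case3 i a s j b t h ih =>
      rw [shiftW_cons, shiftW_cons, starW, starW, if_pos h, if_pos (by omega : i+1 ≤ j+1)]
      simp only [shiftW_cons] at ih ⊢
      rw [ih]
  | case4 i a s j b t h ih =>
      rw [shiftW_cons, shiftW_cons, starW, starW, if_neg h, if_neg (by omega : ¬ i+1 ≤ j+1)]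
      simp only [shiftW_cons] at ih ⊢
      rw [ih]

lemma starW_assoc_aux : ∀ n (s t u : List (ℕ × Bool)),
    s.length + t.length + u.length ≤ n →
    starW (starW s t) u = starW s (starW t u) := by
  intro n
  induction n with
  | zero =>
      intro s t u h
      have hs : s = [] := by cases s <;> simp_all
      have ht : t = [] := by cases t <;> simp_all
      subst hs; subst ht; simp
  | succ n IH =>
      rintro (_ | ⟨⟨i, a⟩, s⟩) t u hn
      · simp
      rcases t with _ | ⟨⟨j, b⟩, t⟩
      · simp
      rcases u with _ | ⟨⟨k, c⟩, u⟩
      · simp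
      simp only [List.length_cons] at hn
      by_cases hij : i ≤ j
      · have hST : starW ((i,a)::s) ((j,b)::t) = (i,a) :: starW s (shiftW ((j,b)::t)) := by
          rw [starW, if_pos hij]
        by_cases hjk : j ≤ k
        · have hTU : starW ((j,b)::t) ((k,c)::u) = (j,b) :: starW t (shiftW ((k,c)::u)) := by
            rw [starW, if_pos hjk]
          rw [hST, hTU, starW, if_pos (le_trans hij hjk), starW, if_pos hij, ← hTU,
              ← starW_shift]
          congr 1
          exact IH s (shiftW ((j,b)::t)) (shiftW ((k,c)::u)) (by simp; omega)
        · push_neg at hjk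
          have hTU : starW ((j,b)::t) ((k,c)::u) = (k,c) :: starW ((j,b)::t) u := by
            rw [starW, if_neg (by omega)]
          by_cases hik : i ≤ k
          · -- then i ≤ j and i ≤ k; but j > k, so i ≤ k < j, i ≤ k
            rw [hST, hTU, starW, if_pos hik]
            have key : shiftW ((k,c) :: starW ((j,b)::t) u)
                = starW (shiftW ((j,b)::t)) (shiftW ((k,c)::u)) := by
              rw [← hTU, ← starW_shift]
            rw [starW, if_pos hik, key]
            congr 1
            exact IH s (shiftW ((j,b)::t)) (shiftW ((k,c)::u)) (by simp; omega)
          · push_neg at hik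
            rw [hST, hTU, starW, if_neg (by omega), starW, if_neg (by omega), ← hST]
            congr 1
            exact IH ((i,a)::s) ((j,b)::t) u (by simp; omega)
      · push_neg at hij
        have hST : starW ((i,a)::s) ((j,b)::t) = (j,b) :: starW ((i,a)::s) t := by
          rw [starW, if_neg (by omega)]
        by_cases hjk : j ≤ k
        · have hTU : starW ((j,b)::t) ((k,c)::u) = (j,b) :: starW t (shiftW ((k,c)::u)) := by
            rw [starW, if_pos hjk]
          rw [hST, hTU, starW, if_pos hjk, starW, if_neg (by omega)]
          congr 1
          exact IH ((i,a)::s) t (shiftW ((k,c)::u)) (by simp; omega)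
        · push_neg at hjk
          have hTU : starW ((j,b)::t) ((k,c)::u) = (k,c) :: starW ((j,b)::t) u := by
            rw [starW, if_neg (by omega)]
          rw [hST, hTU, starW, if_neg (by omega), starW, if_neg (by omega), ← hST]
          congr 1
          exact IH ((i,a)::s) ((j,b)::t) u (by simp; omega)

/-- A word `(i₁ < … < iₙ ; α₁, …, αₙ)`: indices strictly increasing and positive. -/
def SortedWord (w : List (ℕ × Bool)) : Prop :=
  (w.map Prod.fst).Chain' (· < ·) ∧ ∀ p ∈ w, 1 ≤ p.1

theorem starW_assoc (s t u : List (ℕ × Bool))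
    (hs : SortedWord s) (ht : SortedWord t) (hu : SortedWord u) :
    starW (starW s t) u = starW s (starW t u) := by
  exact starW_assoc_aux (s.length + t.length + u.length) s t u le_rfl
end

section
/- For every pHDA X, there is a bijection between paths in X and morphisms of pHDA from a path shape Bσ into X. -/
open CategoryTheory

/-- Validity of a face word `w` on a cube of dimension `n`. -/
def ValidWord (w : List (ℕ × Bool)) (n : ℕ) : Prop :=
  SortedWord w ∧ ∀ k : Fin w.length, (w.get k).1 ≤ n - w.length + k + 1

/-! ## Partial higher dimensional automata -/

/-- A partial higher dimensional automaton (pHDA) on the alphabet `L`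
(data only; the laws are collected in `IspHDA`).  `faceW w` is the partial
face map `∂_{i₁<…<iₖ}^{α₁,…,αₖ}` associated to the word `w`. -/
structure pHDA (L : Type) : Type 1 where
  cell : Type
  dim : cell → ℕ
  faceW : List (ℕ × Bool) → cell →. cell
  init : cell
  label : cell → List L

/-- The laws of a partial HDA: it is a lax functor `□ᵒᵖ → pSet` with an
initial state of dimension 0 and a labelling morphism to `!L`. -/
structure IspHDA {L : Type} (X : pHDA L) : Prop where
  faceW_nil : ∀ x, X.faceW [] x = Part.some x
  faceW_comp : ∀ s t x y z, y ∈ X.faceW s x → z ∈ X.faceW t y → z ∈ X.faceW (starW s t) x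
  faceW_dim : ∀ w x y, y ∈ X.faceW w x → X.dim x = X.dim y + w.length
  faceW_valid : ∀ w x, (X.faceW w x).Dom → ValidWord w (X.dim x)
  init_dim : X.dim X.init = 0
  label_len : ∀ x, (X.label x).length = X.dim x
  label_face : ∀ i α x y, y ∈ X.faceW [(i, α)] x → X.label y = (X.label x).eraseIdx (i - 1)

/-- A morphism of pHDA: a (total) function on cells commuting laxly with the
face maps (`f ∘ ∂ ⊆ ∂ ∘ f`), preserving dimension, initial state and labels. -/
structure pHDAHom {L : Type} (X Y : pHDA L) : Type where
  toFun : X.cell → Y.cell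
  dim_eq : ∀ x, Y.dim (toFun x) = X.dim x
  face_sub : ∀ w x y, y ∈ X.faceW w x → toFun y ∈ Y.faceW w (toFun x)
  init_eq : toFun X.init = Y.init
  label_eq : ∀ x, Y.label (toFun x) = X.label x

/-- The identity morphism of pHDA. -/
def pHDAHom.id {L : Type} (X : pHDA L) : pHDAHom X X :=
  ⟨fun x => x, fun _ => rfl, fun _ _ _ h => h, rfl, fun _ => rfl⟩

/-- Composition of morphisms of pHDA. -/
def pHDAHom.comp {L : Type} {X Y Z : pHDA L} (g : pHDAHom Y Z) (f : pHDAHom X Y) :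
    pHDAHom X Z where
  toFun x := g.toFun (f.toFun x)
  dim_eq x := by rw [g.dim_eq, f.dim_eq]
  face_sub w x y h := g.face_sub w _ _ (f.face_sub w x y h)
  init_eq := by (try dsimp only); rw [f.init_eq, g.init_eq]
  label_eq x := by rw [g.label_eq, f.label_eq]

/-- The category of partial HDA on `L`. -/
instance pHDACategory (L : Type) : Category (pHDA L) where
  Hom := pHDAHom
  id := pHDAHom.id
  comp f g := g.comp f
  id_comp _ := rfl
  comp_id _ := rfl
  assoc _ _ _ := rfl

/-! ## Paths -/

/-- One step of a path: `x →^{j,α} y` means `x = ∂_j^0 y` if `α = 0`, and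
`y = ∂_j^1 x` if `α = 1`. -/
def PathStep {L : Type} (X : pHDA L) (x : X.cell) (j : ℕ) (α : Bool) (y : X.cell) : Prop :=
  if α then y ∈ X.faceW [(j, true)] x else x ∈ X.faceW [(j, false)] y

/-- `IsPath X x p`: `p` is (the list of steps and cells of) a path starting at `x`. -/
def IsPath {L : Type} (X : pHDA L) : X.cell → List ((ℕ × Bool) × X.cell) → Prop
  | _, [] => True
  | x, ((j, α), y) :: rest => PathStep X x j α y ∧ IsPath X y rest

/-- The endpoint of a path starting at the initial state. -/
def pathEnd {L : Type} (X : pHDA L) (p : List ((ℕ × Bool) × X.cell)) : X.cell :=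
  (p.map Prod.snd).getLastD X.init

/-- The type of paths of `X` from the initial state. -/
def PathL {L : Type} (X : pHDA L) : Type :=
  {p : List ((ℕ × Bool) × X.cell) // IsPath X X.init p}

/-- The `k`-th cell along a path (cell `0` is the initial state). -/
def cellAt {L : Type} (X : pHDA L) (p : List ((ℕ × Bool) × X.cell)) (k : ℕ) : X.cell :=
  (X.init :: p.map Prod.snd).getD k X.init

/-- The `k`-th step (1-based) of a path. -/
def stepAt {L : Type} (X : pHDA L) (p : List ((ℕ × Bool) × X.cell)) (k : ℕ) : ℕ × Bool :=
  (p.map Prod.fst).getD (k - 1) (0, true)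

/-- The `⋆`-product `(j₁;α₁) ⋆ … ⋆ (jₙ;αₙ)` of a list of single faces. -/
def starSeg (l : List (ℕ × Bool)) : List (ℕ × Bool) :=
  l.foldl (fun acc p => starW acc [p]) []

/-- The segment of steps `s, …, t` (1-based) of a path. -/
def segSteps {L : Type} (X : pHDA L) (p : List ((ℕ × Bool) × X.cell)) (s t : ℕ) :
    List (ℕ × Bool) :=
  ((p.map Prod.fst).drop (s - 1)).take (t - s + 1)

/-! ## Confluent homotopy -/

/-- Elementary confluent homotopy: the two paths agree outside an interval
`[s,t]` of steps, all steps of both paths in `[s,t]` have direction `1`, and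
the `⋆`-products over `[s,t]` agree. -/
def ElemCH {L : Type} (X : pHDA L) (p q : List ((ℕ × Bool) × X.cell)) : Prop :=
  p.length = q.length ∧
  ∃ s t : ℕ, 0 < s ∧ s < t ∧ t ≤ p.length ∧
    (∀ k, k < s ∨ t ≤ k → cellAt X p k = cellAt X q k) ∧
    (∀ k, 1 ≤ k → k ≤ p.length → (k < s ∨ t < k) → stepAt X p k = stepAt X q k) ∧
    (∀ k, s ≤ k → k ≤ t → (stepAt X p k).2 = true ∧ (stepAt X q k).2 = true) ∧
    starSeg (segSteps X p s t) = starSeg (segSteps X q s t)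

/-- Confluent homotopy: the reflexive transitive closure of elementary
confluent homotopy. -/
def ConfHom {L : Type} (X : pHDA L) :
    List ((ℕ × Bool) × X.cell) → List ((ℕ × Bool) × X.cell) → Prop :=
  Relation.ReflTransGen (ElemCH X)

/-- Confluent homotopy, on paths from the initial state. -/
def CHL {L : Type} (X : pHDA L) : PathL X → PathL X → Prop :=
  fun p q => ConfHom X p.val q.val

/-- The image of a path under a morphism of pHDA. -/
def mapPath {L : Type} {X Y : pHDA L} (f : pHDAHom X Y)
    (p : List ((ℕ × Bool) × X.cell)) : List ((ℕ × Bool) × Y.cell) :=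
  p.map (fun e => (e.1, f.toFun e.2))

/-! ## Spines and path shapes -/

/-- The data of a spine: a list of steps `(jₖ, αₖ)` together with the
dimension–label pair of the target cell (the label `wₖ`; the dimension is its
length).  Cell `0` carries the empty label. -/
def SpineData (L : Type) : Type := List ((ℕ × Bool) × List L)

/-- Validity of a spine continuing from a cell with label `w`. -/
def SpineOk {L : Type} : List L → SpineData L → Prop
  | _, [] => True
  | w, ((j, α), w') :: rest =>
      (if α then 1 ≤ j ∧ j ≤ w.length ∧ w' = w.eraseIdx (j - 1)
       else 1 ≤ j ∧ j ≤ w'.length ∧ w = w'.eraseIdx (j - 1)) ∧ SpineOk w' rest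

/-- A spine `(0,ε) →^{j₁,α₁} … →^{jₙ,αₙ} (dₙ,wₙ)`. -/
def IsSpine {L : Type} (σ : SpineData L) : Prop := SpineOk [] σ

/-- The label of the `k`-th cell of a spine. -/
def spineLabel {L : Type} (σ : SpineData L) (k : ℕ) : List L :=
  (([] : List L) :: σ.map Prod.snd).getD k []

/-- The face relation of the path shape `Bσ`: the smallest relation containing
the generating faces of the spine and closed under `⋆`-composition. -/
inductive BFace {L : Type} (σ : SpineData L) : List (ℕ × Bool) → ℕ → ℕ → Prop
  | nil (k : ℕ) : BFace σ [] k k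
  | face0 (k j : ℕ) : 0 < k → k ≤ σ.length →
      ((σ.map Prod.fst).getD (k - 1) (0, true)) = (j, false) →
      BFace σ [(j, false)] k (k - 1)
  | face1 (k j : ℕ) : k < σ.length →
      ((σ.map Prod.fst).getD k (0, true)) = (j, true) →
      BFace σ [(j, true)] k (k + 1)
  | comp (s t : List (ℕ × Bool)) (k m l : ℕ) :
      BFace σ s k m → BFace σ t m l → BFace σ (starW s t) k l

/-- The path shape `Bσ` associated to a spine `σ`. -/
noncomputable def pathShape {L : Type} (σ : SpineData L) : pHDA L where
  cell := Fin (σ.length + 1)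
  dim k := (spineLabel σ k.val).length
  faceW w k :=
    ⟨∃ m : Fin (σ.length + 1), BFace σ w k.val m.val, fun h => Classical.choose h⟩
  init := ⟨0, Nat.succ_pos _⟩
  label k := spineLabel σ k.val

/-! ## Open maps and coverings w.r.t. path shapes -/

/-- A morphism `f : Y → Z` of pHDA is open w.r.t. the subcategory of path
shapes if it has the right lifting property against every morphism between
path shapes. -/
def POpen {L : Type} {Y Z : pHDA L} (f : pHDAHom Y Z) : Prop :=
  ∀ (σ σ' : SpineData L), IsSpine σ → IsSpine σ' →
    ∀ (g : pHDAHom (pathShape σ) (pathShape σ'))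
      (x : pHDAHom (pathShape σ) Y) (y : pHDAHom (pathShape σ') Z),
      f.comp x = y.comp g →
      ∃ θ : pHDAHom (pathShape σ') Y, θ.comp g = x ∧ f.comp θ = y

/-- A covering: an open map whose lifts are unique. -/
def IsCovering {L : Type} {Y Z : pHDA L} (f : pHDAHom Y Z) : Prop :=
  ∀ (σ σ' : SpineData L), IsSpine σ → IsSpine σ' →
    ∀ (g : pHDAHom (pathShape σ) (pathShape σ'))
      (x : pHDAHom (pathShape σ) Y) (y : pHDAHom (pathShape σ') Z),
      f.comp x = y.comp g →
      ∃! θ : pHDAHom (pathShape σ') Y, θ.comp g = x ∧ f.comp θ = y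

/-! ## Trees, shortcuts, unique path property -/

/-- A tree: a pHDA that is the colimit of a small diagram of path shapes. -/
def IsTree {L : Type} (X : pHDA L) : Prop :=
  ∃ (J : Type) (_ : SmallCategory J) (D : J ⥤ pHDA L),
    (∀ j : J, ∃ σ : SpineData L, IsSpine σ ∧ D.obj j = pathShape σ) ∧
    ∃ c : Limits.Cocone D, Nonempty (Limits.IsColimit c) ∧ c.pt = X

/-- A chain of single faces, applied left to right. -/
def stepChain {L : Type} (X : pHDA L) : List (ℕ × Bool) → X.cell → X.cell → Prop
  | [], x, y => x = y
  | (i, α) :: rest, x, y => ∃ z, z ∈ X.faceW [(i, α)] x ∧ stepChain X rest z y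

/-- `X` has no shortcuts: every defined iterated face factors as a chain of
defined single faces whose `⋆`-product is the given word. -/
def NoShortcut {L : Type} (X : pHDA L) : Prop :=
  ∀ w x, (X.faceW w x).Dom →
    ∃ (l : List (ℕ × Bool)) (y : X.cell), starSeg l = w ∧ stepChain X l x y

/-- The unique path property modulo confluent homotopy: no shortcuts, and for
every cell there is exactly one confluent homotopy class of paths from the
initial state to it. -/
def UniquePathProp {L : Type} (X : pHDA L) : Prop :=
  NoShortcut X ∧ ∀ x : X.cell,
    (∃ p : PathL X, pathEnd X p.val = x) ∧
    ∀ p q : PathL X, pathEnd X p.val = x → pathEnd X q.val = x → CHL X p q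

/-! ## The unfolding -/

/-- The face relation of the unfolding: generated by path extension
(`∂_i^1`), path restriction (`∂_i^0`), and closed under `⋆`-composition. -/
inductive UFace {L : Type} (X : pHDA L) : List (ℕ × Bool) → PathL X → PathL X → Prop
  | nil (p : PathL X) : UFace X [] p p
  | face1 (p q : PathL X) (i : ℕ) (y : X.cell)
      (hy : y ∈ X.faceW [(i, true)] (pathEnd X p.val))
      (hq : q.val = p.val ++ [((i, true), y)]) : UFace X [(i, true)] p q
  | face0 (p q : PathL X) (i : ℕ) (y : X.cell)
      (hp : p.val = q.val ++ [((i, false), y)]) : UFace X [(i, false)] p q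
  | comp (s t : List (ℕ × Bool)) (p q r : PathL X) :
      UFace X s p q → UFace X t q r → UFace X (starW s t) p r

/-- The unfolding `U(X)` of a pHDA `X`: cells are confluent homotopy classes
of paths from the initial state. -/
noncomputable def unfolding {L : Type} (X : pHDA L) : pHDA L where
  cell := Quot (CHL X)
  dim q := X.dim (pathEnd X q.out.val)
  faceW w q :=
    ⟨∃ q' : Quot (CHL X), ∃ p p' : PathL X,
        Quot.mk (CHL X) p = q ∧ Quot.mk (CHL X) p' = q' ∧ UFace X w p p',
      fun h => Classical.choose h⟩
  init := Quot.mk (CHL X) ⟨[], by simp [IsPath]⟩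
  label q := X.label (pathEnd X q.out.val)

/-! ## Auxiliary development for statement 8 -/

section PathsEquivAux

variable {L : Type}

lemma countP_shiftW' (c : ℕ × Bool → Bool) (hc : ∀ i a, c (i+1, a) = c (i, a))
    (t : List (ℕ × Bool)) : (shiftW t).countP c = t.countP c := by
  induction t with
  | nil => rfl
  | cons e r ih =>
    simp only [shiftW, List.map_cons, List.countP_cons] at *
    rw [ih, hc]

lemma countP_starW' (c : ℕ × Bool → Bool) (hc : ∀ i a, c (i+1, a) = c (i, a)) :
    ∀ s t, (starW s t).countP c = s.countP c + t.countP c := by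
  intro s t
  induction s, t using starW.induct with
  | case1 t => simp [starW]
  | case2 s h => cases s with
    | nil => simp [starW]
    | cons e r => simp [starW]
  | case3 i a s j b t h ih =>
    rw [starW]; simp only [if_pos h, List.countP_cons, ih, countP_shiftW' c hc]
    omega
  | case4 i a s j b t h ih =>
    rw [starW]; simp only [if_neg h, List.countP_cons, ih]
    omega

lemma bface_balance {σ : SpineData L} {w : List (ℕ × Bool)} {k m : ℕ}
    (h : BFace σ w k m) :
    m + w.countP (fun p => !p.2) = k + w.countP (fun p => p.2) := by
  induction h with
  | nil k => simp
  | face0 k j hk hkle hs => simp only [List.countP_cons, List.countP_nil]; simp; omega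
  | face1 k j hk hs => simp only [List.countP_cons, List.countP_nil]; simp
  | comp s t k m l h1 h2 ih1 ih2 =>
    rw [countP_starW' (fun p => !p.2) (fun _ _ => rfl) s t,
        countP_starW' (fun p => p.2) (fun _ _ => rfl) s t]
    omega

lemma bface_unique {σ : SpineData L} {w : List (ℕ × Bool)} {k m m' : ℕ}
    (h : BFace σ w k m) (h' : BFace σ w k m') : m = m' := by
  have h1 := bface_balance h
  have h2 := bface_balance h'
  omega

lemma mem_pathShape_faceW {σ : SpineData L} {w : List (ℕ × Bool)}
    {k m : Fin (σ.length + 1)} (h : BFace σ w k.val m.val) :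
    m ∈ (pathShape σ).faceW w k := by
  have hdom : ∃ m' : Fin (σ.length + 1), BFace σ w k.val m'.val := ⟨m, h⟩
  exact ⟨hdom, Fin.ext (bface_unique (Classical.choose_spec hdom) h)⟩

lemma bface_of_mem {σ : SpineData L} {w : List (ℕ × Bool)}
    {k m : Fin (σ.length + 1)} (h : m ∈ (pathShape σ).faceW w k) :
    BFace σ w k.val m.val := by
  obtain ⟨hd, hc⟩ := h
  have hs := Classical.choose_spec hd
  rw [show Classical.choose hd = m from hc] at hs
  exact hs

/-- Cells along a path, with fixed default `X.init`. -/
def cellA (X : pHDA L) (x : X.cell) (l : List ((ℕ × Bool) × X.cell)) (k : ℕ) : X.cell :=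
  (x :: l.map Prod.snd).getD k X.init

def stepA {X : pHDA L} (l : List ((ℕ × Bool) × X.cell)) (k : ℕ) : ℕ × Bool :=
  (l.map Prod.fst).getD k (0, true)

def StepOk (X : pHDA L) (a b : X.cell) (s : ℕ × Bool) : Prop :=
  if s.2 then b ∈ X.faceW [(s.1, true)] a else a ∈ X.faceW [(s.1, false)] b

@[simp] lemma cellA_zero (X : pHDA L) (x : X.cell) (l : List ((ℕ × Bool) × X.cell)) :
    cellA X x l 0 = x := rfl

@[simp] lemma cellA_succ (X : pHDA L) (x : X.cell) (e : (ℕ × Bool) × X.cell)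
    (r : List ((ℕ × Bool) × X.cell)) (k : ℕ) :
    cellA X x (e :: r) (k + 1) = cellA X e.2 r k := by
  simp [cellA]

@[simp] lemma stepA_zero {X : pHDA L} (e : (ℕ × Bool) × X.cell)
    (r : List ((ℕ × Bool) × X.cell)) : stepA (e :: r) 0 = e.1 := rfl

@[simp] lemma stepA_succ {X : pHDA L} (e : (ℕ × Bool) × X.cell)
    (r : List ((ℕ × Bool) × X.cell)) (k : ℕ) : stepA (e :: r) (k + 1) = stepA r k := by
  simp [stepA]

lemma cellA_getElem (X : pHDA L) (x : X.cell) (l : List ((ℕ × Bool) × X.cell))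
    (k : ℕ) (hk : k < l.length) : cellA X x l (k + 1) = l[k].2 := by
  have : cellA X x l (k + 1) = (l.map Prod.snd).getD k X.init := by simp [cellA]
  rw [this, List.getD_eq_getElem _ _ (by simpa using hk), List.getElem_map]

lemma stepA_getElem {X : pHDA L} (l : List ((ℕ × Bool) × X.cell))
    (k : ℕ) (hk : k < l.length) : stepA l k = l[k].1 := by
  rw [stepA, List.getD_eq_getElem _ _ (by simpa using hk), List.getElem_map]

lemma isPath_iff (X : pHDA L) : ∀ (l : List ((ℕ × Bool) × X.cell)) (x : X.cell),
    IsPath X x l ↔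
      ∀ k, k < l.length → StepOk X (cellA X x l k) (cellA X x l (k+1)) (stepA l k)
  | [], x => by simp [IsPath]
  | (⟨⟨j, α⟩, y⟩) :: r, x => by
    rw [show IsPath X x (((j, α), y) :: r) = (PathStep X x j α y ∧ IsPath X y r) from rfl]
    rw [isPath_iff X r y]
    constructor
    · rintro ⟨h1, h2⟩ k hk
      cases k with
      | zero =>
        show StepOk X x (cellA X x (((j, α), y) :: r) 1) ((j, α))
        have : cellA X x (((j, α), y) :: r) 1 = y := by simp
        rw [this]
        exact h1
      | succ k =>
        have hk' : k < r.length := by simpa using Nat.lt_of_succ_lt_succ hk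
        simpa using h2 k hk'
    · intro h
      refine ⟨?_, fun k hk => by simpa using h (k+1) (by simp; omega)⟩
      have h0 := h 0 (by simp)
      have : cellA X x (((j, α), y) :: r) 1 = y := by simp
      rw [this] at h0
      exact h0

lemma face_single_facts {X : pHDA L} (hX : IspHDA X) {a b : X.cell} {j : ℕ} {α : Bool}
    (h : b ∈ X.faceW [(j, α)] a) :
    1 ≤ j ∧ j ≤ (X.label a).length ∧ X.label b = (X.label a).eraseIdx (j - 1) := by
  have hdom : (X.faceW [(j, α)] a).Dom := Part.dom_iff_mem.mpr ⟨b, h⟩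
  obtain ⟨⟨_, hpos⟩, hfin⟩ := hX.faceW_valid _ _ hdom
  have h1 : 1 ≤ j := hpos (j, α) (List.mem_singleton_self _)
  have hd := hX.faceW_dim _ _ _ h
  simp only [List.length_singleton] at hd
  have h2 := hfin ⟨0, by simp⟩
  simp only [List.length_singleton, List.get_eq_getElem] at h2
  have h2' : j ≤ X.dim a - 1 + 0 + 1 := h2
  rw [hX.label_len]
  exact ⟨h1, by omega, hX.label_face j α a b h⟩

def spineOf (X : pHDA L) (l : List ((ℕ × Bool) × X.cell)) : SpineData L :=
  l.map fun e => (e.1, X.label e.2)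

@[simp] lemma spineOf_length (X : pHDA L) (l : List ((ℕ × Bool) × X.cell)) :
    (spineOf X l).length = l.length := by simp [spineOf]

lemma spineOf_map_fst (X : pHDA L) (l : List ((ℕ × Bool) × X.cell)) :
    (spineOf X l).map Prod.fst = l.map Prod.fst := by
  induction l with
  | nil => rfl
  | cons e r ih => simp [spineOf] at *

lemma label_init_eq_nil {X : pHDA L} (hX : IspHDA X) : X.label X.init = [] := by
  rw [← List.length_eq_zero_iff, hX.label_len, hX.init_dim]

lemma spineOk_of_path {X : pHDA L} (hX : IspHDA X) :
    ∀ (l : List ((ℕ × Bool) × X.cell)) (x : X.cell), IsPath X x l →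
      SpineOk (X.label x) (spineOf X l)
  | [], _, _ => trivial
  | (⟨⟨j, α⟩, y⟩) :: r, x, ⟨h1, h2⟩ => by
    refine ⟨?_, spineOk_of_path hX r y h2⟩
    cases α with
    | true =>
      have h1' : y ∈ X.faceW [(j, true)] x := h1
      obtain ⟨a1, a2, a3⟩ := face_single_facts hX h1'
      simp only [if_pos]
      exact ⟨a1, a2, a3⟩
    | false =>
      have h1' : x ∈ X.faceW [(j, false)] y := h1
      obtain ⟨a1, a2, a3⟩ := face_single_facts hX h1'
      simp only [Bool.false_eq_true, if_neg]
      exact ⟨a1, a2, a3⟩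

lemma getD_map' {α β : Type _} (f : α → β) : ∀ (l : List α) (k : ℕ) (d : α),
    (l.map f).getD k (f d) = f (l.getD k d)
  | [], k, d => by simp
  | a :: r, 0, d => by simp
  | a :: r, (k+1), d => by simpa using getD_map' f r k d

lemma spineLabel_spineOf {X : pHDA L} (hX : IspHDA X) (l : List ((ℕ × Bool) × X.cell))
    (k : ℕ) : spineLabel (spineOf X l) k = X.label (cellA X X.init l k) := by
  cases k with
  | zero => exact (label_init_eq_nil hX).symm
  | succ k =>
    have hm : (spineOf X l).map Prod.snd = (l.map Prod.snd).map X.label := by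
      simp [spineOf, List.map_map]
    have : spineLabel (spineOf X l) (k+1) = ((spineOf X l).map Prod.snd).getD k [] := by
      simp [spineLabel]
    rw [this, hm, ← label_init_eq_nil hX, getD_map']
    have : cellA X X.init l (k+1) = (l.map Prod.snd).getD k X.init := by simp [cellA]
    rw [this]

lemma bface_toX {X : pHDA L} (hX : IspHDA X) {l : List ((ℕ × Bool) × X.cell)}
    (hl : IsPath X X.init l) {w : List (ℕ × Bool)} {a b : ℕ}
    (h : BFace (spineOf X l) w a b) :
    cellA X X.init l b ∈ X.faceW w (cellA X X.init l a) := by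
  induction h with
  | nil k => rw [hX.faceW_nil]; exact Part.mem_some _
  | face0 k j hk hkle hs =>
    rw [spineOf_map_fst] at hs
    have hk' : k - 1 < l.length := by simp at hkle; omega
    have hst := (isPath_iff X l X.init).mp hl (k-1) hk'
    rw [show stepA l (k-1) = (j, false) from hs] at hst
    have : k - 1 + 1 = k := by omega
    rw [this] at hst
    exact hst
  | face1 k j hk hs =>
    rw [spineOf_map_fst] at hs
    have hk' : k < l.length := by simpa using hk
    have hst := (isPath_iff X l X.init).mp hl k hk'
    rw [show stepA l k = (j, true) from hs] at hst
    exact hst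
  | comp s t k m n h1 h2 ih1 ih2 => exact hX.faceW_comp s t _ _ _ ih1 ih2

/-- The morphism `B(σ(p)) → X` associated to a path `p`. -/
noncomputable def homOfPath {X : pHDA L} (hX : IspHDA X) (p : PathL X) :
    pHDAHom (pathShape (spineOf X p.val)) X where
  toFun k := cellA X X.init p.val k.val
  dim_eq k := by
    show X.dim _ = (spineLabel _ _).length
    rw [spineLabel_spineOf hX, hX.label_len]
  face_sub w k m h := bface_toX hX p.prop (bface_of_mem h)
  init_eq := rfl
  label_eq k := (spineLabel_spineOf hX p.val k.val).symm

/-- The path associated to a morphism `Bσ → X`. -/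
noncomputable def pathOfHom (X : pHDA L) (σ : SpineData L)
    (f : pHDAHom (pathShape σ) X) : List ((ℕ × Bool) × X.cell) :=
  List.ofFn fun i : Fin σ.length => ((σ.get i).1, f.toFun ⟨i.val + 1, by omega⟩)

@[simp] lemma pathOfHom_length (X : pHDA L) (σ : SpineData L)
    (f : pHDAHom (pathShape σ) X) : (pathOfHom X σ f).length = σ.length := by
  simp [pathOfHom]

lemma pathOfHom_map_fst (X : pHDA L) (σ : SpineData L) (f : pHDAHom (pathShape σ) X) :
    (pathOfHom X σ f).map Prod.fst = σ.map Prod.fst := by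
  conv_rhs => rw [← List.ofFn_get σ]
  rw [pathOfHom, List.map_ofFn, List.map_ofFn]
  rfl

lemma cellA_pathOfHom (X : pHDA L) (σ : SpineData L) (f : pHDAHom (pathShape σ) X)
    (k : ℕ) (hk : k < σ.length + 1) :
    cellA X X.init (pathOfHom X σ f) k = f.toFun ⟨k, hk⟩ := by
  cases k with
  | zero => exact f.init_eq.symm
  | succ k =>
    have hk' : k < σ.length := by omega
    rw [cellA_getElem X X.init _ k (by simpa using hk')]
    simp only [pathOfHom]
    rw [List.getElem_ofFn]

lemma stepA_pathOfHom (X : pHDA L) (σ : SpineData L) (f : pHDAHom (pathShape σ) X)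
    (k : ℕ) (hk : k < σ.length) :
    (stepA (pathOfHom X σ f) k) = (σ.map Prod.fst).getD k (0, true) := by
  rw [stepA, pathOfHom_map_fst]

lemma isPath_pathOfHom (X : pHDA L) (σ : SpineData L) (f : pHDAHom (pathShape σ) X) :
    IsPath X X.init (pathOfHom X σ f) := by
  rw [isPath_iff]
  intro k hk
  have hk' : k < σ.length := by simpa using hk
  rw [cellA_pathOfHom X σ f k (by omega), cellA_pathOfHom X σ f (k+1) (by omega),
    stepA_pathOfHom X σ f k hk']
  have hget : (σ.map Prod.fst).getD k (0, true) = (σ.get ⟨k, hk'⟩).1 := by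
    rw [List.getD_eq_getElem _ _ (by exact Nat.lt_of_lt_of_le hk' (le_of_eq (List.length_map _).symm))]; erw [List.getElem_map]
    rfl
  rcases hjα : (σ.map Prod.fst).getD k (0, true) with ⟨j, α⟩
  cases α with
  | true =>
    have hb : BFace σ [(j, true)] k (k + 1) := BFace.face1 k j hk' hjα
    have hmem := mem_pathShape_faceW (σ := σ)
      (k := ⟨k, by omega⟩) (m := ⟨k + 1, by omega⟩) hb
    exact f.face_sub _ _ _ hmem
  | false =>
    have hb : BFace σ [(j, false)] (k + 1) k :=
      BFace.face0 (k + 1) j (Nat.succ_pos k) (by omega) hjα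
    have hmem := mem_pathShape_faceW (σ := σ)
      (k := ⟨k + 1, by omega⟩) (m := ⟨k, by omega⟩) hb
    exact f.face_sub _ _ _ hmem

lemma pHDAHom_ext {X Y : pHDA L} {f g : pHDAHom X Y}
    (h : ∀ x, f.toFun x = g.toFun x) : f = g := by
  cases f; cases g
  congr 1
  exact funext h

lemma spineLabel_get (σ : SpineData L) (i : ℕ) (hi : i < σ.length) :
    spineLabel σ (i + 1) = (σ.get ⟨i, hi⟩).2 := by
  have h1 : spineLabel σ (i + 1) = (σ.map Prod.snd).getD i [] := by simp [spineLabel]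
  rw [h1, List.getD_eq_getElem _ _ (by exact Nat.lt_of_lt_of_le hi (le_of_eq (List.length_map _).symm))]; erw [List.getElem_map]
  rfl

end PathsEquivAux

/-- for every pHDA `X` there is a bijection between paths in `X`
(from the initial state) and morphisms of pHDA from a path shape to `X`. -/
theorem paths_equiv_pathShape_homs {L : Type} (X : pHDA L) (hX : IspHDA X) :
    Nonempty ((Σ σ : {s : SpineData L // IsSpine s}, pHDAHom (pathShape σ.val) X) ≃
      PathL X) := by
  classical
  letI Ψ : (Σ σ : {s : SpineData L // IsSpine s}, pHDAHom (pathShape σ.val) X) → PathL X :=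
    fun z => ⟨pathOfHom X z.1.val z.2, isPath_pathOfHom X z.1.val z.2⟩
  refine ⟨Equiv.ofBijective Ψ ⟨?_, ?_⟩⟩
  · -- injectivity
    rintro ⟨⟨σ, hσ⟩, f⟩ ⟨⟨σ', hσ'⟩, f'⟩ h
    have hv : pathOfHom X σ f = pathOfHom X σ' f' := congrArg Subtype.val h
    have hlen : σ.length = σ'.length := by
      have := congrArg List.length hv
      simpa using this
    have hσσ : σ = σ' := by
      apply List.ext_getElem hlen
      intro n h₁ h₂
      have hmf : σ.map Prod.fst = σ'.map Prod.fst := by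
        rw [← pathOfHom_map_fst X σ f, ← pathOfHom_map_fst X σ' f', hv]
      have hget : σ.get ⟨n, h₁⟩ = σ'.get ⟨n, h₂⟩ := by
        refine Prod.ext ?_ ?_
        · have e1 : (σ.map Prod.fst).getD n (0, true) = (σ.get ⟨n, h₁⟩).1 := by
            rw [List.getD_eq_getElem _ _ (by exact Nat.lt_of_lt_of_le h₁ (le_of_eq (List.length_map _).symm))]; erw [List.getElem_map,
              List.get_eq_getElem]
          have e2 : (σ'.map Prod.fst).getD n (0, true) = (σ'.get ⟨n, h₂⟩).1 := by
            rw [List.getD_eq_getElem _ _ (by exact Nat.lt_of_lt_of_le h₂ (le_of_eq (List.length_map _).symm))]; erw [List.getElem_map,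
              List.get_eq_getElem]
          rw [← e1, ← e2, hmf]
        · have s1 : spineLabel σ (n + 1) = (σ.get ⟨n, h₁⟩).2 := spineLabel_get σ n h₁
          have s2 : spineLabel σ' (n + 1) = (σ'.get ⟨n, h₂⟩).2 := spineLabel_get σ' n h₂
          have t1 : spineLabel σ (n + 1) =
              X.label (cellA X X.init (pathOfHom X σ f) (n + 1)) := by
            rw [cellA_pathOfHom X σ f (n + 1) (by omega)]
            exact (f.label_eq ⟨n + 1, by show n + 1 < σ.length + 1; omega⟩).symm
          have t2 : spineLabel σ' (n + 1) =
              X.label (cellA X X.init (pathOfHom X σ' f') (n + 1)) := by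
            rw [cellA_pathOfHom X σ' f' (n + 1) (by omega)]
            exact (f'.label_eq ⟨n + 1, by show n + 1 < σ'.length + 1; omega⟩).symm
          rw [← s1, ← s2, t1, t2, hv]
      rw [← List.get_eq_getElem (l := σ) (i := ⟨n, h₁⟩), ← List.get_eq_getElem (l := σ') (i := ⟨n, h₂⟩)]
      exact hget
    subst hσσ
    have hf : f = f' := by
      apply pHDAHom_ext
      intro k
      have e1 := cellA_pathOfHom X σ f k.val k.isLt
      have e2 := cellA_pathOfHom X σ f' k.val k.isLt
      change _ = f.toFun k at e1; change _ = f'.toFun k at e2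
      rw [← e1, ← e2, hv]
    subst hf
    rfl
  · -- surjectivity
    intro p
    refine ⟨⟨⟨spineOf X p.val, ?_⟩, homOfPath hX p⟩, ?_⟩
    · have h := spineOk_of_path hX p.val X.init p.prop
      rw [label_init_eq_nil hX] at h
      exact h
    · apply Subtype.ext
      show pathOfHom X (spineOf X p.val) (homOfPath hX p) = p.val
      apply List.ext_getElem (by simp)
      intro n h₁ h₂
      have h₁' : n < (spineOf X p.val).length := by simpa using h₁
      have hentry : (pathOfHom X (spineOf X p.val) (homOfPath hX p))[n] =
          (((spineOf X p.val).get ⟨n, h₁'⟩).1,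
            (homOfPath hX p).toFun ⟨n + 1, by omega⟩) := by
        simp only [pathOfHom]
        rw [List.getElem_ofFn]
      rw [hentry]
      refine Prod.ext ?_ ?_
      · show ((spineOf X p.val).get ⟨n, h₁'⟩).1 = p.val[n].1
        erw [List.get_eq_getElem]
        simp [spineOf]
      · show cellA X X.init p.val (n + 1) = p.val[n].2
        exact cellA_getElem X X.init p.val n h₂
end
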